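/- Let (Δ̃,Θ̃) be a normalized directive bi-sequence of a binary generalized pseudostandard word u=u(Δ̃,Θ̃). Then u is periodic if and only if one of the following conditions is met: (1) (Δ̃,Θ̃)=(v a^ω, σ ϑ^ω) for some finite word v over {0,1}, some finite sequence σ of antimorphisms from {E,R} with |v|=|σ|, some letter a∈{0,1} and some ϑ∈{E,R}; (2) (Δ̃,Θ̃)=(v(a ā)^ω, σ(RE)^ω) for some finite word v over {0,1}, some finite sequence σ of antimorphisms from {E,R} with |v|=|σ| and some letter a∈{0,1}, where ā denotes the letter distinct from a. -/
import Mathlib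


/-!
Generalized pseudostandard words (de Luca–De Luca) over binary and ternary
alphabets: antimorphisms, pseudopalindromic closure, directive bi-sequences.
-/

namespace GPS

variable {A : Type*} [Inhabited A]

/-- The involutory antimorphism on finite words induced by the letter map `f`:
reverse the word and apply `f` letterwise. -/
def anti (f : A → A) (w : List A) : List A := (w.map f).reverse

/-- `w` is an `f`-palindrome (a `ϑ`-palindrome for the antimorphism induced by `f`). -/
def IsPal (f : A → A) (w : List A) : Prop := anti f w = w

/-- The `f`-palindromic closure of `w`: a shortest `f`-palindrome having `w` as a
prefix (returns `w` itself in the degenerate case where none exists). -/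
noncomputable def closure (f : A → A) (w : List A) : List A := by
  classical
  exact if h : ∃ n : ℕ, ∃ p : List A, p.length = n ∧ w <+: p ∧ IsPal f p then
    Classical.choose (Nat.find_spec h)
  else w

/-- The sequence of pseudopalindromic prefixes `w_n` of the generalized
pseudostandard word `u(Δ, Θ)`; `prefixes Δ Θ n` is the paper's `w_n`, with
`Δ n = δ_{n+1}` and `Θ n = ϑ_{n+1}` (0-based indexing of the bi-sequence). -/
noncomputable def prefixes (Δ : ℕ → A) (Θ : ℕ → A → A) : ℕ → List A
  | 0 => []
  | n + 1 => closure (Θ n) (prefixes Δ Θ n ++ [Δ n])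

/-- The generalized pseudostandard word `u(Δ, Θ)` as an infinite word `ℕ → A`. -/
noncomputable def word (Δ : ℕ → A) (Θ : ℕ → A → A) (k : ℕ) : A :=
  (prefixes Δ Θ (k + 1)).getD k default

/-- `p` is a (finite) prefix of the infinite word `x`. -/
def IsPref (p : List A) (x : ℕ → A) : Prop := ∀ i < p.length, p.getD i default = x i

/-- `w` is a factor of the infinite word `x`. -/
def IsFactor (w : List A) (x : ℕ → A) : Prop :=
  ∃ i : ℕ, ∀ j < w.length, w.getD j default = x (i + j)

/-- `w` is a left special factor of the infinite word `x`. -/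
def LeftSpecial (w : List A) (x : ℕ → A) : Prop :=
  ∃ a b : A, a ≠ b ∧ IsFactor (a :: w) x ∧ IsFactor (b :: w) x

/-- The infinite word `x` is (eventually) periodic, i.e. of the form `z v^ω`
with `v` nonempty. -/
def Periodic (x : ℕ → A) : Prop :=
  ∃ p : ℕ, 0 < p ∧ ∃ N : ℕ, ∀ n, N ≤ n → x (n + p) = x n

/-- The infinite word `x` is purely periodic with period `q`, i.e. `x = q^ω`. -/
def PurePeriod (q : List A) (x : ℕ → A) : Prop :=
  q ≠ [] ∧ ∀ i : ℕ, x i = q.getD (i % q.length) default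

/-- Concatenation of `k` copies of the finite word `l`, i.e. `l^k`. -/
def wpow (l : List A) (k : ℕ) : List A := (List.replicate k l).flatten

/-! ### The binary alphabet `{0,1}` -/

/-- Letter map of the reversal antimorphism `R` over `{0,1}`. -/
def Rb : Fin 2 → Fin 2 := id

/-- Letter map of the exchange antimorphism `E` over `{0,1}` (`0 ↔ 1`). -/
def Eb : Fin 2 → Fin 2 := fun x => x + 1

/-- A binary directive bi-sequence is normalized if the sequence `(w_n)` contains
every prefix of `u(Δ,Θ)` that is an `R`-palindrome or an `E`-palindrome. -/
def NormalizedB (Δ : ℕ → Fin 2) (Θ : ℕ → Fin 2 → Fin 2) : Prop :=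
  ∀ p : List (Fin 2), IsPref p (word Δ Θ) → (IsPal Rb p ∨ IsPal Eb p) →
    ∃ n : ℕ, prefixes Δ Θ n = p

/-! ### The ternary alphabet `{0,1,2}` -/

/-- Letter map of the reversal antimorphism `R` over `{0,1,2}`. -/
def Rt : Fin 3 → Fin 3 := id

/-- Letter map of the exchange antimorphism `E_i` over `{0,1,2}`: it fixes `i`
and exchanges the other two letters (indeed `-(i+x) = i` iff `x = i` in `Fin 3`). -/
def Et (i : Fin 3) : Fin 3 → Fin 3 := fun x => -(i + x)

/-- A ternary directive bi-sequence is normalized if the sequence `(w_n)` contains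
every prefix of `u(Δ,Θ)` that is a `ϑ`-palindrome for some involutory antimorphism `ϑ`. -/
def NormalizedT (Δ : ℕ → Fin 3) (Θ : ℕ → Fin 3 → Fin 3) : Prop :=
  ∀ p : List (Fin 3), IsPref p (word Δ Θ) → (IsPal Rt p ∨ ∃ i : Fin 3, IsPal (Et i) p) →
    ∃ n : ℕ, prefixes Δ Θ n = p

end GPS
namespace GPS

variable {A : Type*} [Inhabited A]

theorem anti_append (f : A → A) (x y : List A) :
    anti f (x ++ y) = anti f y ++ anti f x := by
  simp [anti]

theorem anti_singleton (f : A → A) (a : A) : anti f [a] = [f a] := rfl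

theorem anti_length (f : A → A) (w : List A) : (anti f w).length = w.length := by
  simp [anti]

theorem anti_anti (f : A → A) (hf : ∀ a, f (f a) = a) (w : List A) :
    anti f (anti f w) = w := by
  simp [anti, List.map_reverse, List.map_map]
  have : f ∘ f = id := funext hf
  simp [this]

theorem anti_suffix_of_prefix (f : A → A) {v q : List A} (h : v <+: q) :
    anti f v <:+ anti f q := by
  obtain ⟨t, rfl⟩ := h
  exact ⟨anti f t, (anti_append f v t).symm⟩

theorem isPal_sandwich (f : A → A) (hf : ∀ a, f (f a) = a) {p : List A}
    (hp : IsPal f p) (x : List A) : IsPal f (x ++ p ++ anti f x) := by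
  unfold IsPal at *
  rw [anti_append, anti_append, anti_anti f hf, hp, List.append_assoc]

theorem closure_exists (f : A → A) (hf : ∀ a, f (f a) = a) (w : List A) :
    ∃ n : ℕ, ∃ p : List A, p.length = n ∧ w <+: p ∧ IsPal f p := by
  refine ⟨_, w ++ anti f w, rfl, ⟨anti f w, rfl⟩, ?_⟩
  unfold IsPal
  rw [anti_append, anti_anti f hf]

theorem closure_spec (f : A → A) (hf : ∀ a, f (f a) = a) (w : List A) :
    IsPal f (closure f w) ∧ w <+: closure f w ∧
      ∀ p : List A, w <+: p → IsPal f p → (closure f w).length ≤ p.length := by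
  have hex := closure_exists f hf w
  unfold closure
  rw [dif_pos hex]
  classical
  obtain ⟨hlen, hpre, hpal⟩ := Classical.choose_spec (Nat.find_spec hex)
  refine ⟨hpal, hpre, fun p hp hpalp => ?_⟩
  rw [hlen]
  exact Nat.find_min' hex ⟨p, rfl, hp, hpalp⟩

end GPS
namespace GPS

set_option linter.unusedSectionVars false

variable {A : Type*} [Inhabited A]

section W

variable (Δ : ℕ → A) (Θ : ℕ → A → A) (hΘ : ∀ n a, Θ n (Θ n a) = a)

theorem prefix_getD {l₁ l₂ : List A} (h : l₁ <+: l₂) {i : ℕ} (hi : i < l₁.length) :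
    l₁.getD i default = l₂.getD i default := by
  obtain ⟨t, rfl⟩ := h
  rw [List.getD_eq_getElem _ _ hi,
    List.getD_eq_getElem _ _ (lt_of_lt_of_le hi (by simp)),
    List.getElem_append_left hi]

include hΘ

theorem prefixes_pal (n : ℕ) : IsPal (Θ n) (prefixes Δ Θ (n + 1)) :=
  (closure_spec (Θ n) (hΘ n) (prefixes Δ Θ n ++ [Δ n])).1

theorem prefixes_snoc_prefix (n : ℕ) :
    prefixes Δ Θ n ++ [Δ n] <+: prefixes Δ Θ (n + 1) :=
  (closure_spec (Θ n) (hΘ n) (prefixes Δ Θ n ++ [Δ n])).2.1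

theorem prefixes_min (n : ℕ) (p : List A) (hp : prefixes Δ Θ n ++ [Δ n] <+: p)
    (hpal : IsPal (Θ n) p) : (prefixes Δ Θ (n + 1)).length ≤ p.length :=
  (closure_spec (Θ n) (hΘ n) (prefixes Δ Θ n ++ [Δ n])).2.2 p hp hpal

theorem prefixes_len_succ (n : ℕ) :
    (prefixes Δ Θ n).length + 1 ≤ (prefixes Δ Θ (n + 1)).length := by
  have h := (prefixes_snoc_prefix Δ Θ hΘ n).length_le
  simpa using h

theorem prefixes_prefix_succ (n : ℕ) : prefixes Δ Θ n <+: prefixes Δ Θ (n + 1) :=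
  (List.prefix_append _ _).trans (prefixes_snoc_prefix Δ Θ hΘ n)

theorem prefixes_prefix {n k : ℕ} (h : n ≤ k) : prefixes Δ Θ n <+: prefixes Δ Θ k := by
  induction k with
  | zero => simpa [Nat.le_zero.mp h]
  | succ k ih =>
    rcases Nat.lt_or_ge n (k+1) with h' | h'
    · exact (ih (Nat.lt_succ_iff.mp h')).trans (prefixes_prefix_succ Δ Θ hΘ k)
    · have : n = k + 1 := le_antisymm h h'
      simp [this]

theorem prefixes_len_lt {n k : ℕ} (h : n < k) :
    (prefixes Δ Θ n).length < (prefixes Δ Θ k).length := by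
  have h1 := prefixes_len_succ Δ Θ hΘ n
  have h2 := (prefixes_prefix Δ Θ hΘ h).length_le
  have h3 := (prefixes_prefix Δ Θ hΘ (show n+1 ≤ k by omega)).length_le
  omega

theorem prefixes_len_ge (n : ℕ) : n ≤ (prefixes Δ Θ n).length := by
  induction n with
  | zero => simp
  | succ n ih => have := prefixes_len_succ Δ Θ hΘ n; omega

theorem prefixes_pref_word (n : ℕ) (i : ℕ) (hi : i < (prefixes Δ Θ n).length) :
    (prefixes Δ Θ n).getD i default = word Δ Θ i := by
  unfold word
  have hii : i < (prefixes Δ Θ (i+1)).length := prefixes_len_ge Δ Θ hΘ (i+1)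
  rcases le_or_gt n (i+1) with h | h
  · exact (prefix_getD (prefixes_prefix Δ Θ hΘ h) hi)
  · exact (prefix_getD (prefixes_prefix Δ Θ hΘ h.le) hii).symm

theorem delta_eq_word (n : ℕ) :
    Δ n = word Δ Θ ((prefixes Δ Θ n).length) := by
  have h := prefixes_snoc_prefix Δ Θ hΘ n
  have hl : (prefixes Δ Θ n).length < (prefixes Δ Θ n ++ [Δ n]).length := by simp
  have h1 := prefix_getD h hl
  have h2 := prefixes_pref_word Δ Θ hΘ (n+1) ((prefixes Δ Θ n).length)
    (lt_of_lt_of_le hl h.length_le)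
  rw [← h2, ← h1]
  simp

end W

end GPS
namespace GPS

set_option linter.unusedSectionVars false

variable {A : Type*} [Inhabited A]

/-- The prefix of length `L` of the infinite word `x` is an `f`-pseudopalindrome. -/
def PalP (x : ℕ → A) (f : A → A) (L : ℕ) : Prop :=
  ∀ i, i < L → x i = f (x (L - 1 - i))

theorem isPal_iff_palP {x : ℕ → A} {f : A → A} {p : List A}
    (hp : ∀ i, i < p.length → p.getD i default = x i) :
    IsPal f p ↔ PalP x f p.length := by
  constructor
  · intro hpal i hi
    have hj : p.length - 1 - i < p.length := by omega
    have h1 : (anti f p).getD i default = f (p.getD (p.length - 1 - i) default) := by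
      rw [List.getD_eq_getElem _ _ (by simpa [anti_length] using hi),
        List.getD_eq_getElem _ _ hj]
      simp only [anti, List.getElem_reverse, List.getElem_map, List.length_map]
    rw [← hp i hi, ← hp _ hj, ← h1, hpal]
  · intro hpal
    unfold IsPal
    apply List.ext_getElem (by simp [anti_length])
    intro i h1 h2
    have h1' : i < p.length := by simpa [anti_length] using h1
    have hj : p.length - 1 - i < p.length := by omega
    have : (anti f p)[i] = f (p[p.length - 1 - i]) := by
      simp only [anti, List.getElem_reverse, List.getElem_map, List.length_map]
    rw [this]
    have := hpal i h1'
    rw [← List.getD_eq_getElem p default h1', ← List.getD_eq_getElem p default hj,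
      hp i h1', hp _ hj]
    exact (this).symm

section W

variable (Δ : ℕ → A) (Θ : ℕ → A → A) (hΘ : ∀ n a, Θ n (Θ n a) = a)

include hΘ

theorem prefixes_palP (n : ℕ) :
    PalP (word Δ Θ) (Θ n) (prefixes Δ Θ (n+1)).length := by
  rw [← isPal_iff_palP (fun i hi => prefixes_pref_word Δ Θ hΘ (n+1) i hi)]
  exact prefixes_pal Δ Θ hΘ n

/-- The prefix of `u` of length `L`, as a list. -/
theorem exists_prefix_list (L : ℕ) :
    ∃ p : List A, p.length = L ∧ (∀ i, i < L → p.getD i default = word Δ Θ i) ∧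
      IsPref p (word Δ Θ) := by
  refine ⟨(prefixes Δ Θ L).take L, ?_, ?_, ?_⟩
  · simp [Nat.min_eq_left (prefixes_len_ge Δ Θ hΘ L)]
  · intro i hi
    have hi' : i < (prefixes Δ Θ L).length := lt_of_lt_of_le hi (prefixes_len_ge Δ Θ hΘ L)
    rw [List.getD_eq_getElem _ _ (by simp; omega), List.getElem_take]
    rw [← prefixes_pref_word Δ Θ hΘ L i hi', List.getD_eq_getElem _ _ hi']
  · intro i hi
    have hL : ((prefixes Δ Θ L).take L).length = L := by
      simp [Nat.min_eq_left (prefixes_len_ge Δ Θ hΘ L)]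
    rw [hL] at hi
    have hi' : i < (prefixes Δ Θ L).length := lt_of_lt_of_le hi (prefixes_len_ge Δ Θ hΘ L)
    rw [List.getD_eq_getElem _ _ (by rw [hL]; exact hi), List.getElem_take]
    rw [← prefixes_pref_word Δ Θ hΘ L i hi', List.getD_eq_getElem _ _ hi']

end W

end GPS
namespace GPS

set_option linter.unusedSectionVars false

variable {A : Type*} [Inhabited A]

section Periods

variable {x : ℕ → A} {f : A → A} {s N : ℕ}

theorem pal_border {L D : ℕ} (h1 : PalP x f L) (h2 : PalP x f (L + D))
    (i : ℕ) (hi : i + D < L + D) : x (i + D) = x i := by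
  have e1 : L + D - 1 - (i + D) = L - 1 - i := by omega
  have := h2 (i + D) hi
  rw [e1] at this
  rw [this, ← h1 i (by omega)]

theorem pal_up (hs : 0 < s) (hN : ∀ n, N ≤ n → x (n + s) = x n)
    {L : ℕ} (hL : 2*N + 2*s ≤ L) (h : PalP x f L) : PalP x f (L + s) := by
  intro i hi
  rcases le_or_gt (i + N + 1) L with hc | hc
  · have e1 : L + s - 1 - i = (L - 1 - i) + s := by omega
    rw [e1, hN _ (by omega)]
    exact h i (by omega)
  · have e2 : i = (i - s) + s := by omega
    rw [e2, hN _ (by omega)]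
    have := h (i - s) (by omega)
    rw [this]
    congr 2
    omega

theorem pal_up_iter (hs : 0 < s) (hN : ∀ n, N ≤ n → x (n + s) = x n)
    {L : ℕ} (hL : 2*N + 2*s ≤ L) (h : PalP x f L) (k : ℕ) : PalP x f (L + k * s) := by
  induction k with
  | zero => simpa using h
  | succ k ih =>
    have : L + (k+1) * s = (L + k * s) + s := by ring
    rw [this]
    exact pal_up hs hN (by omega) ih

theorem eval_delta (hs : 0 < s) (hN : ∀ n, N ≤ n → x (n + s) = x n)
    {L : ℕ} (hL : 2*N + 2*s ≤ L) (h : PalP x f L) : x L = f (x (s - 1)) := by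
  have h2 := pal_up hs hN hL h
  have := h2 L (by omega)
  rwa [show L + s - 1 - L = s - 1 by omega] at this

theorem full_period_of_pairs {D : ℕ}
    (h : ∀ M : ℕ, ∃ L, M ≤ L ∧ PalP x f L ∧ PalP x f (L + D)) :
    ∀ i, x (i + D) = x i := by
  intro i
  obtain ⟨L, hL, h1, h2⟩ := h (i + 1)
  exact pal_border h1 h2 i (by omega)

theorem pal_residue (hs : 0 < s) (hN : ∀ n, N ≤ n → x (n + s) = x n)
    (smin : ∀ d, 0 < d → (∀ i, x (i + d) = x i) → s ≤ d)
    {L1 L2 : ℕ} (hB : 2*N + 2*s ≤ L1) (hle : L1 ≤ L2)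
    (h1 : PalP x f L1) (h2 : PalP x f L2) : s ∣ (L2 - L1) := by
  by_contra hd
  set d := (L2 - L1) % s with hdd
  have hd0 : 0 < d := Nat.pos_of_ne_zero (fun h0 => hd (Nat.dvd_of_mod_eq_zero h0))
  have hds : d < s := Nat.mod_lt _ hs
  set K := (L2 - L1) / s with hK
  have hKe : L2 = L1 + s * K + d := by
    have := Nat.div_add_mod (L2 - L1) s
    rw [← hK, ← hdd] at this
    omega
  have hfull : ∀ i, x (i + d) = x i := by
    apply full_period_of_pairs (f := f)
    intro M
    refine ⟨L1 + (K + M) * s, ?_, pal_up_iter hs hN hB h1 (K + M), ?_⟩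
    · have h1' : M ≤ M * s := Nat.le_mul_of_pos_right _ hs
      have h2' : M * s ≤ (K + M) * s := Nat.mul_le_mul_right s (Nat.le_add_left M K)
      omega
    · have e : L1 + (K + M) * s + d = L2 + M * s := by
        rw [hKe]; ring
      rw [e]
      exact pal_up_iter hs hN (by omega) h2 M
  exact absurd (smin d hd0 hfull) (by omega)

end Periods

end GPS
namespace GPS

set_option linter.unusedSectionVars false

variable {A : Type*} [Inhabited A]

theorem isPal_reverse {f : A → A} {w : List A} (hw : IsPal f w) : IsPal f w.reverse := by
  have hw' : (w.map f).reverse = w := hw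
  show ((w.reverse.map f)).reverse = w.reverse
  rw [List.map_reverse, List.reverse_reverse]
  conv_rhs => rw [← hw', List.reverse_reverse]

theorem isPal_id_anti (f : A → A) {w : List A} (hw : IsPal (id : A → A) w) :
    IsPal (id : A → A) (anti f w) := by
  have hw' : w.reverse = w := by
    have : (w.map id).reverse = w := hw
    simpa using this
  show ((anti f w).map id).reverse = anti f w
  simp only [List.map_id]
  show ((w.map f).reverse).reverse = (w.map f).reverse
  rw [List.reverse_reverse]
  conv_rhs => rw [← List.map_reverse, hw']

theorem S_pal_same (f : A → A) (hf : ∀ a, f (f a) = a) {w : List A}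
    (hw : IsPal f w) (b : A) : IsPal f ([f b] ++ w ++ [b]) := by
  show anti f ([f b] ++ w ++ [b]) = [f b] ++ w ++ [b]
  rw [anti_append, anti_append, anti_singleton, anti_singleton, hf, hw]
  simp

section W

variable (Δ : ℕ → A) (Θ : ℕ → A → A) (hΘ : ∀ n a, Θ n (Θ n a) = a)

include hΘ

theorem palP_of_isPal_prefixes {f : A → A} {n : ℕ} (h : IsPal f (prefixes Δ Θ n)) :
    PalP (word Δ Θ) f (prefixes Δ Θ n).length :=
  (isPal_iff_palP (fun i hi => prefixes_pref_word Δ Θ hΘ n i hi)).1 h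

theorem step_bound (n : ℕ)
    (hS : IsPal (Θ (n+1)) (anti (Θ n) (prefixes Δ Θ n ++ [Δ n]) ++ [Δ (n+1)])) :
    (prefixes Δ Θ (n+2)).length + (prefixes Δ Θ n).length
      ≤ 2 * (prefixes Δ Θ (n+1)).length := by
  set v := prefixes Δ Θ n ++ [Δ n] with hv
  have hsuf : anti (Θ n) v <:+ prefixes Δ Θ (n+1) := by
    have h1 := anti_suffix_of_prefix (Θ n) (prefixes_snoc_prefix Δ Θ hΘ n)
    have h2 : anti (Θ n) (prefixes Δ Θ (n+1)) = prefixes Δ Θ (n+1) :=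
      prefixes_pal Δ Θ hΘ n
    rwa [h2] at h1
  obtain ⟨x, hx⟩ := hsuf
  set S := anti (Θ n) v ++ [Δ (n+1)] with hSdef
  have hq : IsPal (Θ (n+1)) (x ++ S ++ anti (Θ (n+1)) x) := isPal_sandwich _ (hΘ (n+1)) hS x
  have hpre : prefixes Δ Θ (n+1) ++ [Δ (n+1)] <+: x ++ S ++ anti (Θ (n+1)) x := by
    refine ⟨anti (Θ (n+1)) x, ?_⟩
    rw [← hx, hSdef]
    simp [List.append_assoc]
  have hmin := prefixes_min Δ Θ hΘ (n+1) _ hpre hq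
  rw [show n+1+1 = n+2 from rfl] at hmin
  have hlx : x.length + v.length = (prefixes Δ Θ (n+1)).length := by
    rw [← hx]; simp [anti_length]
  have hlv : v.length = (prefixes Δ Θ n).length + 1 := by simp [hv]
  have hlen : (x ++ S ++ anti (Θ (n+1)) x).length = 2 * x.length + v.length + 1 := by
    simp [hSdef, anti_length]; ring
  omega

end W

theorem eventually_const_of_antitone (g : ℕ → ℕ) (hg : ∀ l, g (l+1) ≤ g l) :
    ∃ l0, ∀ l, l0 ≤ l → g l = g l0 := by
  have hmono : ∀ l l', l ≤ l' → g l' ≤ g l := by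
    intro l l' h
    induction l' with
    | zero => simp [Nat.le_zero.mp h]
    | succ k ih =>
      rcases Nat.lt_or_ge l (k+1) with h' | h'
      · exact le_trans (hg k) (ih (Nat.lt_succ_iff.mp h'))
      · have : l = k + 1 := le_antisymm h h'
        simp [this]
  have hne : (Set.range g).Nonempty := ⟨g 0, 0, rfl⟩
  obtain ⟨l0, hl0⟩ := Nat.sInf_mem hne
  refine ⟨l0, fun l hl => le_antisymm (hl0 ▸ hmono _ _ hl) ?_⟩
  rw [hl0]
  exact Nat.sInf_le ⟨l, rfl⟩

end GPS
namespace GPS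

set_option linter.unusedSectionVars false

variable {A : Type*} [Inhabited A]

theorem periodic_core (Δ : ℕ → A) (Θ : ℕ → A → A) (hΘ : ∀ n a, Θ n (Θ n a) = a)
    (m : ℕ) (f : A → A)
    (hS : ∀ n, m ≤ n → IsPal (Θ (n+1)) (anti (Θ n) (prefixes Δ Θ n ++ [Δ n]) ++ [Δ (n+1)]))
    (htype : ∀ k : ℕ, IsPal f (prefixes Δ Θ (m + 2*k + 2))) :
    Periodic (word Δ Θ) := by
  have hstep : ∀ n, m ≤ n → (prefixes Δ Θ (n+2)).length + (prefixes Δ Θ n).length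
      ≤ 2 * (prefixes Δ Θ (n+1)).length := fun n hn => step_bound Δ Θ hΘ n (hS n hn)
  have hinc : ∀ n, (prefixes Δ Θ n).length + 1 ≤ (prefixes Δ Θ (n+1)).length :=
    prefixes_len_succ Δ Θ hΘ
  obtain ⟨l0, hl0⟩ := eventually_const_of_antitone
    (fun l => (prefixes Δ Θ (m+l+1)).length - (prefixes Δ Θ (m+l)).length) (by
      intro l
      show (prefixes Δ Θ (m+(l+1)+1)).length - (prefixes Δ Θ (m+(l+1))).length
        ≤ (prefixes Δ Θ (m+l+1)).length - (prefixes Δ Θ (m+l)).length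
      rw [show m+(l+1)+1 = m+l+2 by ring, show m+(l+1) = m+l+1 by ring]
      have h1 := hstep (m+l) (by omega)
      rw [show m+l+1+1 = m+l+2 by ring] at h1
      have h2 := hinc (m+l)
      have h3 := hinc (m+l+1)
      rw [show m+l+1+1 = m+l+2 by ring] at h3
      omega)
  set c := (prefixes Δ Θ (m+l0+1)).length - (prefixes Δ Θ (m+l0)).length with hc
  have hstable : ∀ l, l0 ≤ l →
      (prefixes Δ Θ (m+l+1)).length - (prefixes Δ Θ (m+l)).length = c := fun l hl => hl0 l hl
  have hc1 : 1 ≤ c := by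
    have h2 := hinc (m+l0)
    omega
  have hfull : ∀ i, word Δ Θ (i + 2*c) = word Δ Θ i := by
    apply full_period_of_pairs (f := f)
    intro M
    set k := M + l0 with hk
    refine ⟨(prefixes Δ Θ (m + 2*k + 2)).length, ?_, ?_, ?_⟩
    · have := prefixes_len_ge Δ Θ hΘ (m + 2*k + 2)
      omega
    · exact palP_of_isPal_prefixes Δ Θ hΘ (htype k)
    · have st1 := hstable (2*k+2) (by omega)
      have st2 := hstable (2*k+3) (by omega)
      rw [show m+(2*k+2)+1 = m+2*k+3 by ring, show m+(2*k+2) = m+2*k+2 by ring] at st1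
      rw [show m+(2*k+3)+1 = m+2*k+4 by ring, show m+(2*k+3) = m+2*k+3 by ring] at st2
      have h2 := hinc (m+2*k+2)
      have h3 := hinc (m+2*k+3)
      rw [show m+2*k+2+1 = m+2*k+3 by ring] at h2
      rw [show m+2*k+3+1 = m+2*k+4 by ring] at h3
      have heq : (prefixes Δ Θ (m+2*k+4)).length = (prefixes Δ Θ (m+2*k+2)).length + 2*c := by
        omega
      have hp := palP_of_isPal_prefixes Δ Θ hΘ (htype (k+1))
      rw [show m+2*(k+1)+2 = m+2*k+4 by ring] at hp
      rwa [heq] at hp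
  exact ⟨2*c, by omega, 0, fun n _ => hfull n⟩

end GPS
namespace GPS

theorem Eb_invol : ∀ b : Fin 2, Eb (Eb b) = b := by decide

theorem Eb_ne (b : Fin 2) : Eb b ≠ b := by revert b; decide

theorem anti_Rb (w : List (Fin 2)) : anti Rb w = w.reverse := by
  simp [anti, Rb]

theorem theta_invol {Θ : ℕ → Fin 2 → Fin 2} (hΘ : ∀ n, Θ n = Rb ∨ Θ n = Eb) :
    ∀ n b, Θ n (Θ n b) = b := by
  intro n b
  rcases hΘ n with h | h <;> rw [h]
  · rfl
  · exact Eb_invol b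

theorem suff_case1 (Δ : ℕ → Fin 2) (Θ : ℕ → Fin 2 → Fin 2)
    (hΘ : ∀ n, Θ n = Rb ∨ Θ n = Eb) (m : ℕ) (a : Fin 2) (ϑ : Fin 2 → Fin 2)
    (hϑ : ϑ = Rb ∨ ϑ = Eb) (h : ∀ n, m ≤ n → Δ n = a ∧ Θ n = ϑ) :
    Periodic (word Δ Θ) := by
  have hinv := theta_invol hΘ
  have hϑinv : ∀ b, ϑ (ϑ b) = b := by
    rcases hϑ with h' | h' <;> rw [h']
    · intro b; rfl
    · exact Eb_invol
  have hpalW : ∀ n, m ≤ n → IsPal ϑ (prefixes Δ Θ (n+1)) := by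
    intro n hn
    have hp := prefixes_pal Δ Θ hinv n
    rwa [(h n hn).2] at hp
  apply periodic_core Δ Θ hinv (m+1) ϑ
  · intro n hn
    obtain ⟨n', rfl⟩ : ∃ n', n = n' + 1 := ⟨n - 1, by omega⟩
    obtain ⟨hd, ht⟩ := h (n'+1) (by omega)
    obtain ⟨hd1, ht1⟩ := h (n'+2) (by omega)
    have hpal := hpalW n' (by omega)
    rw [ht, hd, show n'+1+1 = n'+2 from rfl, ht1, hd1]
    have he : anti ϑ (prefixes Δ Θ (n'+1) ++ [a]) ++ [a]
        = [ϑ a] ++ prefixes Δ Θ (n'+1) ++ [a] := by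
      rw [anti_append, anti_singleton, hpal]
    rw [he]
    exact S_pal_same ϑ hϑinv hpal a
  · intro k
    have := hpalW (m + 2*k + 2) (by omega)
    rwa [show m+2*k+2+1 = m+1+2*k+2 by ring] at this

theorem suff_case2 (Δ : ℕ → Fin 2) (Θ : ℕ → Fin 2 → Fin 2)
    (hΘ : ∀ n, Θ n = Rb ∨ Θ n = Eb) (m : ℕ) (a : Fin 2)
    (h : ∀ l : ℕ, Δ (m + 2*l) = a ∧ Δ (m + 2*l + 1) = Eb a ∧
      Θ (m + 2*l) = Rb ∧ Θ (m + 2*l + 1) = Eb) :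
    Periodic (word Δ Θ) := by
  have hinv := theta_invol hΘ
  have hRinv : ∀ b : Fin 2, Rb (Rb b) = b := fun b => rfl
  have hpos : ∀ n, m ≤ n → ((n - m) % 2 = 0 → Θ n = Rb ∧ Δ n = a) ∧
      ((n - m) % 2 = 1 → Θ n = Eb ∧ Δ n = Eb a) := by
    intro n hn
    constructor
    · intro hp
      have he : n = m + 2 * ((n - m) / 2) := by omega
      rw [he]
      exact ⟨(h _).2.2.1, (h _).1⟩
    · intro hp
      have he : n = m + 2 * ((n - m) / 2) + 1 := by omega
      rw [he]
      exact ⟨(h _).2.2.2, (h _).2.1⟩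
  apply periodic_core Δ Θ hinv (m+1) Rb
  · intro n hn
    rcases Nat.mod_two_eq_zero_or_one (n - m) with hp | hp
    · -- n even offset: Θ n = Rb, Δ n = a ; previous is E-type
      obtain ⟨ht, hd⟩ := (hpos n (by omega)).1 hp
      obtain ⟨ht1, hd1⟩ := (hpos (n+1) (by omega)).2 (by omega)
      obtain ⟨n', rfl⟩ : ∃ n', n = n' + 1 := ⟨n - 1, by omega⟩
      have hpal : IsPal Eb (prefixes Δ Θ (n'+1)) := by
        have hp' := prefixes_pal Δ Θ hinv n'
        rwa [((hpos n' (by omega)).2 (by omega)).1] at hp'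
      rw [ht, hd, ht1, hd1]
      have he : anti Rb (prefixes Δ Θ (n'+1) ++ [a]) ++ [Eb a]
          = [a] ++ (prefixes Δ Θ (n'+1)).reverse ++ [Eb a] := by
        rw [anti_Rb, List.reverse_append]
        simp
      rw [he]
      have hS := S_pal_same Eb Eb_invol (isPal_reverse hpal) (Eb a)
      rwa [Eb_invol a] at hS
    · -- n odd offset: Θ n = Eb, Δ n = Eb a ; previous is R-type
      obtain ⟨ht, hd⟩ := (hpos n (by omega)).2 hp
      obtain ⟨ht1, hd1⟩ := (hpos (n+1) (by omega)).1 (by omega)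
      obtain ⟨n', rfl⟩ : ∃ n', n = n' + 1 := ⟨n - 1, by omega⟩
      have hpal : IsPal Rb (prefixes Δ Θ (n'+1)) := by
        have hp' := prefixes_pal Δ Θ hinv n'
        rwa [((hpos n' (by omega)).1 (by omega)).1] at hp'
      rw [ht, hd, ht1, hd1]
      have he : anti Eb (prefixes Δ Θ (n'+1) ++ [Eb a]) ++ [a]
          = [a] ++ anti Eb (prefixes Δ Θ (n'+1)) ++ [a] := by
        rw [anti_append, anti_singleton, Eb_invol]
      rw [he]
      have hQ : IsPal Rb (anti Eb (prefixes Δ Θ (n'+1))) :=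
        isPal_id_anti Eb hpal
      have hS := S_pal_same Rb hRinv hQ a
      exact hS
  · intro k
    have hp' := prefixes_pal Δ Θ hinv (m + 2*(k+1))
    rw [(h (k+1)).2.2.1] at hp'
    rwa [show m+2*(k+1)+1 = m+1+2*k+2 by ring] at hp'

end GPS
namespace GPS

theorem necessity (Δ : ℕ → Fin 2) (Θ : ℕ → Fin 2 → Fin 2)
    (hΘ : ∀ n, Θ n = Rb ∨ Θ n = Eb)
    (hnorm : NormalizedB Δ Θ)
    (hper : Periodic (word Δ Θ)) :
    (∃ m : ℕ, ∃ a : Fin 2, ∃ ϑ : Fin 2 → Fin 2, (ϑ = Rb ∨ ϑ = Eb) ∧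
        ∀ n, m ≤ n → Δ n = a ∧ Θ n = ϑ) ∨
      (∃ m : ℕ, ∃ a : Fin 2, ∀ l : ℕ,
        Δ (m + 2*l) = a ∧ Δ (m + 2*l + 1) = Eb a ∧
        Θ (m + 2*l) = Rb ∧ Θ (m + 2*l + 1) = Eb) := by
  classical
  have hinv := theta_invol hΘ
  obtain ⟨hs0, N, hN⟩ := Nat.find_spec hper
  set s := Nat.find hper with hsdef
  have smin : ∀ d, 0 < d → (∀ i, word Δ Θ (i + d) = word Δ Θ i) → s ≤ d :=
    fun d hd hf => Nat.find_le ⟨hd, 0, fun n _ => hf n⟩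
  set B := 2*N + 2*s with hB
  -- basic facts
  have not_both : ∀ L, 0 < L → PalP (word Δ Θ) Rb L → PalP (word Δ Θ) Eb L → False := by
    intro L hL h1 h2
    have e1 : word Δ Θ 0 = word Δ Θ (L - 1 - 0) := h1 0 hL
    have e2 : word Δ Θ 0 = Eb (word Δ Θ (L - 1 - 0)) := h2 0 hL
    apply Eb_ne (word Δ Θ (L - 1 - 0))
    rw [← e2, e1]
  have type_of : ∀ n, PalP (word Δ Θ) (Θ n) (prefixes Δ Θ (n+1)).length :=
    prefixes_palP Δ Θ hinv
  have dicho : ∀ n, PalP (word Δ Θ) Rb (prefixes Δ Θ (n+1)).length ∨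
      PalP (word Δ Θ) Eb (prefixes Δ Θ (n+1)).length := by
    intro n
    rcases hΘ n with h | h
    · left; have := type_of n; rwa [h] at this
    · right; have := type_of n; rwa [h] at this
  have exists_w : ∀ (f : Fin 2 → Fin 2) (L : ℕ), (f = Rb ∨ f = Eb) →
      PalP (word Δ Θ) f L → ∃ n, (prefixes Δ Θ n).length = L := by
    intro f L hf hpal
    obtain ⟨p, hplen, hpd, hppref⟩ := exists_prefix_list Δ Θ hinv L
    have hpal' : IsPal f p := by
      rw [isPal_iff_palP (fun i hi => hpd i (hplen ▸ hi)), hplen]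
      exact hpal
    obtain ⟨n, hn⟩ := hnorm p hppref (by rcases hf with h | h <;> [left; right] <;> rwa [← h])
    exact ⟨n, by rw [hn, hplen]⟩
  have btw : ∀ (f : Fin 2 → Fin 2) (n L : ℕ), (f = Rb ∨ f = Eb) →
      PalP (word Δ Θ) f L → (prefixes Δ Θ n).length < L →
      L < (prefixes Δ Θ (n+1)).length → False := by
    intro f n L hf hpal h1 h2
    obtain ⟨k, hk⟩ := exists_w f L hf hpal
    rcases le_or_gt k n with h | h
    · have := (prefixes_prefix Δ Θ hinv h).length_le
      omega
    · have := (prefixes_prefix Δ Θ hinv (show n+1 ≤ k by omega)).length_le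
      omega
  have len_ge := prefixes_len_ge Δ Θ hinv
  have dEq := delta_eq_word Δ Θ hinv
  -- infinitude predicates
  by_cases hE : ∀ M : ℕ, ∃ L, M ≤ L ∧ PalP (word Δ Θ) Eb L
  · by_cases hR : ∀ M : ℕ, ∃ L, M ≤ L ∧ PalP (word Δ Θ) Rb L
    · -- Case C : both infinite
      right
      obtain ⟨LR, hLR, hLRpal⟩ := hR B
      obtain ⟨LE, hLE, hLEpal⟩ := hE B
      set m1 := LR + LE + B + s + 2 with hm1
      -- window gadget
      have window : ∀ (g : Fin 2 → Fin 2) (Lg W : ℕ), B ≤ Lg → Lg ≤ W →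
          PalP (word Δ Θ) g Lg →
          ∃ L', W < L' ∧ L' ≤ W + s ∧ PalP (word Δ Θ) g L' := by
        intro g Lg W hBLg hLgW hg
        have hdm := Nat.div_add_mod (W - Lg) s
        have hmod := Nat.mod_lt (W - Lg) hs0
        refine ⟨Lg + ((W - Lg)/s + 1) * s, ?_, ?_, ?_⟩
        · have e : Lg + ((W - Lg)/s + 1) * s = Lg + s*((W - Lg)/s) + s := by ring
          rw [e]; omega
        · have e : Lg + ((W - Lg)/s + 1) * s = Lg + s*((W - Lg)/s) + s := by ring
          rw [e]; omega
        · exact pal_up_iter hs0 hN hBLg hg _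
      -- no two consecutive of same type, above m1
      have key : ∀ (f g : Fin 2 → Fin 2) (Lg : ℕ), (f = Rb ∧ g = Eb ∨ f = Eb ∧ g = Rb) →
          B ≤ Lg → Lg ≤ m1 → PalP (word Δ Θ) g Lg →
          ∀ n, m1 ≤ n → PalP (word Δ Θ) f (prefixes Δ Θ n).length →
          PalP (word Δ Θ) f (prefixes Δ Θ (n+1)).length → False := by
        intro f g Lg hfg hBLg hLgm1 hg n hn hf1 hf2
        have hf' : f = Rb ∨ f = Eb := by tauto
        have hg' : g = Rb ∨ g = Eb := by tauto
        have hlen1 : B ≤ (prefixes Δ Θ n).length := le_trans (by omega) (len_ge n)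
        have hlt := prefixes_len_lt Δ Θ hinv (show n < n+1 by omega)
        have hdvd : s ∣ ((prefixes Δ Θ (n+1)).length - (prefixes Δ Θ n).length) :=
          pal_residue hs0 hN smin hlen1 (le_of_lt hlt) hf1 hf2
        have hup : PalP (word Δ Θ) f ((prefixes Δ Θ n).length + s) :=
          pal_up hs0 hN hlen1 hf1
        have hle : (prefixes Δ Θ (n+1)).length ≤ (prefixes Δ Θ n).length + s := by
          by_contra hcon
          exact btw f n _ hf' hup (by omega) (by omega)
        have heq : (prefixes Δ Θ (n+1)).length = (prefixes Δ Θ n).length + s := by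
          rcases hdvd with ⟨c, hc⟩
          rcases Nat.lt_or_ge c 1 with h | h
          · have hc0 : c = 0 := by omega
            rw [hc0, Nat.mul_zero] at hc
            omega
          · have : s ≤ s * c := Nat.le_mul_of_pos_right s (by omega)
            omega
        obtain ⟨L', hL1, hL2, hL3⟩ := window g Lg ((prefixes Δ Θ n).length) hBLg
          (le_trans hLgm1 (le_trans hn (len_ge n))) hg
        rcases Nat.lt_or_ge L' ((prefixes Δ Θ n).length + s) with h | h
        · exact btw g n L' hg' hL3 hL1 (by omega)
        · have hL'eq : L' = (prefixes Δ Θ n).length + s := by omega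
          rw [hL'eq] at hL3
          rcases hfg with ⟨hf0, hg0⟩ | ⟨hf0, hg0⟩
          · exact not_both _ (by have := len_ge n; omega) (hf0 ▸ hup) (hg0 ▸ hL3)
          · exact not_both _ (by have := len_ge n; omega) (hg0 ▸ hL3) (hf0 ▸ hup)
      have keyR : ∀ n, m1 ≤ n → PalP (word Δ Θ) Rb (prefixes Δ Θ n).length →
          PalP (word Δ Θ) Rb (prefixes Δ Θ (n+1)).length → False :=
        key Rb Eb LE (by left; exact ⟨rfl, rfl⟩) hLE (by omega) hLEpal
      have keyE : ∀ n, m1 ≤ n → PalP (word Δ Θ) Eb (prefixes Δ Θ n).length →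
          PalP (word Δ Θ) Eb (prefixes Δ Θ (n+1)).length → False :=
        key Eb Rb LR (by right; exact ⟨rfl, rfl⟩) hLR (by omega) hLRpal
      -- dichotomy for n ≥ 1 (at index n, i.e. prefixes n with n ≥ 1)
      have dicho' : ∀ n, 1 ≤ n → PalP (word Δ Θ) Rb (prefixes Δ Θ n).length ∨
          PalP (word Δ Θ) Eb (prefixes Δ Θ n).length := by
        intro n hn
        obtain ⟨n', rfl⟩ : ∃ n', n = n' + 1 := ⟨n - 1, by omega⟩
        exact dicho n'
      have notboth' : ∀ n, 1 ≤ n → PalP (word Δ Θ) Rb (prefixes Δ Θ n).length →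
          PalP (word Δ Θ) Eb (prefixes Δ Θ n).length → False := by
        intro n hn h1 h2
        exact not_both _ (by have := len_ge n; omega) h1 h2
      -- find starting index m with E-type
      have hmex : ∃ m, m1 + 1 ≤ m ∧ PalP (word Δ Θ) Eb (prefixes Δ Θ m).length ∧
          PalP (word Δ Θ) Rb (prefixes Δ Θ (m+1)).length := by
        rcases dicho' (m1+1) (by omega) with h1 | h1
        · rcases dicho' (m1+2) (by omega) with h2 | h2
          · exact absurd h2 (fun h2 => keyR (m1+1) (by omega) h1 h2)
          · rcases dicho' (m1+3) (by omega) with h3 | h3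
            · exact ⟨m1+2, by omega, h2, by rwa [show m1+2+1 = m1+3 from rfl]⟩
            · exact absurd h3 (fun h3 => keyE (m1+2) (by omega) h2 h3)
        · rcases dicho' (m1+2) (by omega) with h2 | h2
          · exact ⟨m1+1, by omega, h1, by rwa [show m1+1+1 = m1+2 from rfl]⟩
          · exact absurd h2 (fun h2 => keyE (m1+1) (by omega) h1 h2)
      obtain ⟨m, hm, hmE, hmR⟩ := hmex
      -- the alternating pattern
      have pattern : ∀ l : ℕ, PalP (word Δ Θ) Eb (prefixes Δ Θ (m+2*l)).length ∧
          PalP (word Δ Θ) Rb (prefixes Δ Θ (m+2*l+1)).length := by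
        intro l
        induction l with
        | zero => exact ⟨by simpa using hmE, by simpa using hmR⟩
        | succ l ih =>
          obtain ⟨ihE, ihR⟩ := ih
          have hE2 : PalP (word Δ Θ) Eb (prefixes Δ Θ (m+2*(l+1))).length := by
            rcases dicho' (m+2*(l+1)) (by omega) with h | h
            · exfalso
              apply keyR (m+2*l+1) (by omega) ihR
              rwa [show m+2*l+1+1 = m+2*(l+1) by ring]
            · exact h
          refine ⟨hE2, ?_⟩
          rcases dicho' (m+2*(l+1)+1) (by omega) with h | h
          · exact h
          · exfalso
            apply keyE (m+2*(l+1)) (by omega) hE2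
            rwa [show m+2*(l+1)+1 = m+2*(l+1)+1 from rfl]
      -- conclude
      refine ⟨m, Eb (word Δ Θ (s-1)), fun l => ?_⟩
      obtain ⟨hpE, hpR⟩ := pattern l
      obtain ⟨hpE', _⟩ := pattern (l+1)
      have hBl : B ≤ (prefixes Δ Θ (m+2*l)).length := le_trans (by omega) (len_ge _)
      have hBl1 : B ≤ (prefixes Δ Θ (m+2*l+1)).length := le_trans (by omega) (len_ge _)
      have hd0 : Δ (m+2*l) = Eb (word Δ Θ (s-1)) := by
        rw [dEq (m+2*l)]
        exact eval_delta hs0 hN hBl hpE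
      have hd1 : Δ (m+2*l+1) = Eb (Eb (word Δ Θ (s-1))) := by
        rw [dEq (m+2*l+1), Eb_invol]
        exact eval_delta hs0 hN hBl1 hpR
      have ht0 : Θ (m+2*l) = Rb := by
        rcases hΘ (m+2*l) with h | h
        · exact h
        · exfalso
          have := type_of (m+2*l)
          rw [h] at this
          exact notboth' (m+2*l+1) (by omega) hpR this
      have ht1 : Θ (m+2*l+1) = Eb := by
        rcases hΘ (m+2*l+1) with h | h
        · exfalso
          have := type_of (m+2*l+1)
          rw [h] at this
          rw [show m+2*l+1+1 = m+2*(l+1) by ring] at this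
          exact notboth' (m+2*(l+1)) (by omega) this hpE'
        · exact h
      exact ⟨hd0, hd1, ht0, ht1⟩
    · -- Case B : R-palindromic prefixes bounded
      left
      push_neg at hR
      obtain ⟨M, hM⟩ := hR
      set m := M + B + 1 with hm
      refine ⟨m+1, Eb (word Δ Θ (s-1)), Eb, Or.inr rfl, fun n hn => ?_⟩
      have hth : ∀ k, m ≤ k → Θ k = Eb := by
        intro k hk
        rcases hΘ k with h | h
        · exfalso
          have := type_of k
          rw [h] at this
          exact hM _ (le_trans (by have := len_ge (k+1); omega) (le_refl _)) this
        · exact h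
      have hpal : PalP (word Δ Θ) Eb (prefixes Δ Θ n).length := by
        obtain ⟨n', rfl⟩ : ∃ n', n = n' + 1 := ⟨n - 1, by omega⟩
        have := type_of n'
        rwa [hth n' (by omega)] at this
      refine ⟨?_, hth n (by omega)⟩
      rw [dEq n]
      exact eval_delta hs0 hN (le_trans (by have := len_ge n; omega) (le_refl _)) hpal
  · -- Case A : E-palindromic prefixes bounded
    left
    push_neg at hE
    obtain ⟨M, hM⟩ := hE
    set m := M + B + 1 with hm
    refine ⟨m+1, word Δ Θ (s-1), Rb, Or.inl rfl, fun n hn => ?_⟩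
    have hth : ∀ k, m ≤ k → Θ k = Rb := by
      intro k hk
      rcases hΘ k with h | h
      · exact h
      · exfalso
        have := type_of k
        rw [h] at this
        exact hM _ (le_trans (by have := len_ge (k+1); omega) (le_refl _)) this
    have hpal : PalP (word Δ Θ) Rb (prefixes Δ Θ n).length := by
      obtain ⟨n', rfl⟩ : ∃ n', n = n' + 1 := ⟨n - 1, by omega⟩
      have := type_of n'
      rwa [hth n' (by omega)] at this
    refine ⟨?_, hth n (by omega)⟩
    rw [dEq n]
    have := eval_delta hs0 hN (le_trans (by have := len_ge n; omega) (le_refl _)) hpal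
    rw [this]
    rfl

end GPS
namespace GPS

/-- a binary generalized pseudostandard word with normalized
directive bi-sequence `(Δ̃,Θ̃)` is periodic iff `(Δ̃,Θ̃) = (v a^ω, σ ϑ^ω)` or
`(Δ̃,Θ̃) = (v(a ā)^ω, σ(RE)^ω)`, with `|v| = |σ|` in both cases. -/
theorem periodicity_binary_normalized (Δ : ℕ → Fin 2) (Θ : ℕ → Fin 2 → Fin 2)
    (hΘ : ∀ n, Θ n = Rb ∨ Θ n = Eb)
    (hnorm : NormalizedB Δ Θ) :
    Periodic (word Δ Θ) ↔
      (∃ m : ℕ, ∃ a : Fin 2, ∃ ϑ : Fin 2 → Fin 2, (ϑ = Rb ∨ ϑ = Eb) ∧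
        ∀ n, m ≤ n → Δ n = a ∧ Θ n = ϑ) ∨
      (∃ m : ℕ, ∃ a : Fin 2, ∀ l : ℕ,
        Δ (m + 2*l) = a ∧ Δ (m + 2*l + 1) = Eb a ∧
        Θ (m + 2*l) = Rb ∧ Θ (m + 2*l + 1) = Eb) := by
  constructor
  · exact fun hper => necessity Δ Θ hΘ hnorm hper
  · rintro (⟨m, a, ϑ, hϑ, h⟩ | ⟨m, a, h⟩)
    · exact suff_case1 Δ Θ hΘ m a ϑ hϑ h
    · exact suff_case2 Δ Θ hΘ m a h

end GPS
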